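/- arXiv:1710.05797 — 3 statements merged into one kernel-verified Lean document; each statement's English description precedes it below -/
import Mathlib

section
/- The rotational shape functions Ny2 and Ny3 satisfy the Kronecker delta property: Ny2(Pj) = Ny3(Pj) = 0 for j = 1,2,3; ∂Ny2/∂y(Pj) = ∂Ny3/∂y(Pj) = 0 for j = 1,2,3; ∂Ny2/∂x(P2) = -1 and ∂Ny2/∂x(P1) = ∂Ny2/∂x(P3) = 0; ∂Ny3/∂x(P3) = -1 and ∂Ny3/∂x(P1) = ∂Ny3/∂x(P2) = 0. -/
noncomputable section

/-- Area coordinate `L1(x,y) = 1 - x/a - y/b`. -/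
def L1 (a b : ℝ) (x y : ℝ) : ℝ := 1 - x / a - y / b

/-- Area coordinate `L2(x,y) = x/a - (1/h - 1/b)·y`. -/
def L2 (a h b : ℝ) (x y : ℝ) : ℝ := x / a - (1 / h - 1 / b) * y

/-- Area coordinate `L3(x,y) = y/h`. -/
def L3 (h : ℝ) (x y : ℝ) : ℝ := y / h

/-- Rotational shape function
`Ny2 = (a·h/b)·(L2²L3 + ½L1L2L3) + a·(L1L2² + ½L1L2L3)`. -/
def Ny2 (a h b : ℝ) (x y : ℝ) : ℝ :=
  (a * h / b) * ((L2 a h b x y) ^ 2 * L3 h x y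
      + (1 / 2) * L1 a b x y * L2 a h b x y * L3 h x y)
    + a * (L1 a b x y * (L2 a h b x y) ^ 2
      + (1 / 2) * L1 a b x y * L2 a h b x y * L3 h x y)

/-- Rotational shape function
`Ny3 = a·(1 - h/b)·(L3²L1 + ½L1L2L3) - (a·h/b)·(L2L3² + ½L1L2L3)`. -/
def Ny3 (a h b : ℝ) (x y : ℝ) : ℝ :=
  a * (1 - h / b) * ((L3 h x y) ^ 2 * L1 a b x y
      + (1 / 2) * L1 a b x y * L2 a h b x y * L3 h x y)
    - (a * h / b) * (L2 a h b x y * (L3 h x y) ^ 2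
      + (1 / 2) * L1 a b x y * L2 a h b x y * L3 h x y)

/-- Partial derivative in the first variable. -/
def pdx (f : ℝ → ℝ → ℝ) (x y : ℝ) : ℝ := deriv (fun t => f t y) x

/-- Partial derivative in the second variable. -/
def pdy (f : ℝ → ℝ → ℝ) (x y : ℝ) : ℝ := deriv (fun t => f x t) y

/-! At a node one area coordinate equals `1` and the other two vanish, so every product of two
distinct area coordinates vanishes there. Each monomial of `Ny2` and `Ny3` contains two distinct
coordinates, hence both functions vanish at the nodes; moreover `L1 L2 L3` has zero gradient there
and a monomial `u² v` has gradient `u² ∇v`. Thus at a node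
`∇Ny2 = L2² (a h/b ∇L3 + a ∇L1)` and `∇Ny3 = L3² (a (1 - h/b) ∇L1 - a h/b ∇L2)`; the brackets are
`(-1, 0)` because the coordinates are affine with `∇L1 = (-1/a, -1/b)`, `∇L2 = (1/a, 1/b - 1/h)`,
`∇L3 = (0, 1/h)`. -/

section Monomials

variable {u v w : ℝ → ℝ} {u' v' w' t : ℝ}

theorem HasDerivAt.sq_mul_of_mul_eq_zero (hu : HasDerivAt u u' t) (hv : HasDerivAt v v' t)
    (huv : u t * v t = 0) : HasDerivAt (fun s => u s ^ 2 * v s) (u t ^ 2 * v') t :=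
  ((hu.pow 2).mul hv).congr_deriv (by
    simp only [Pi.pow_apply]; push_cast; linear_combination 2 * u' * huv)

theorem HasDerivAt.mul_mul_of_pairwise_mul_eq_zero (hu : HasDerivAt u u' t)
    (hv : HasDerivAt v v' t) (hw : HasDerivAt w w' t) (huv : u t * v t = 0)
    (hvw : v t * w t = 0) (hwu : w t * u t = 0) :
    HasDerivAt (fun s => u s * v s * w s) 0 t :=
  ((hu.mul hv).mul hw).congr_deriv (by
    simp only [Pi.mul_apply]; linear_combination u' * hvw + v' * hwu + w' * huv)

end Monomials

section AreaCoordinates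

variable {a h b : ℝ} {X Y : ℝ → ℝ} {X' Y' t : ℝ}

theorem hasDerivAt_L1 (hX : HasDerivAt X X' t) (hY : HasDerivAt Y Y' t) :
    HasDerivAt (fun s => L1 a b (X s) (Y s)) (-(X' / a) - Y' / b) t :=
  ((hX.div_const a).const_sub 1).sub (hY.div_const b)

theorem hasDerivAt_L2 (hX : HasDerivAt X X' t) (hY : HasDerivAt Y Y' t) :
    HasDerivAt (fun s => L2 a h b (X s) (Y s)) (X' / a - (1 / h - 1 / b) * Y') t :=
  (hX.div_const a).sub (hY.const_mul (1 / h - 1 / b))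

theorem hasDerivAt_L3 (hY : HasDerivAt Y Y' t) :
    HasDerivAt (fun s => L3 h (X s) (Y s)) (Y' / h) t :=
  hY.div_const h

theorem areaCoords_P1 : L1 a b 0 0 = 1 ∧ L2 a h b 0 0 = 0 ∧ L3 h 0 0 = 0 := by
  simp [L1, L2, L3]

theorem areaCoords_P2 (ha : a ≠ 0) : L1 a b a 0 = 0 ∧ L2 a h b a 0 = 1 ∧ L3 h a 0 = 0 := by
  simp [L1, L2, L3, ha]

theorem areaCoords_P3 (ha : a ≠ 0) (hh : h ≠ 0) :
    L1 a b (a * (1 - h / b)) h = 0 ∧ L2 a h b (a * (1 - h / b)) h = 0 ∧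
      L3 h (a * (1 - h / b)) h = 1 := by
  refine ⟨?_, ?_, div_self hh⟩ <;> simp only [L1, L2] <;> field_simp <;> ring

end AreaCoordinates

/-- At most one area coordinate is nonzero; as `L1 + L2 + L3 = 1`, this singles out the nodes. -/
def IsNode (a h b x y : ℝ) : Prop :=
  L1 a b x y * L2 a h b x y = 0 ∧ L2 a h b x y * L3 h x y = 0 ∧ L3 h x y * L1 a b x y = 0

section Nodes

variable {a h b x y : ℝ} {X Y : ℝ → ℝ} {X' Y' t : ℝ}

theorem Ny2_eq_zero_of_isNode (hn : IsNode a h b x y) : Ny2 a h b x y = 0 := by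
  obtain ⟨h12, h23, -⟩ := hn
  unfold Ny2
  linear_combination (a * h / b * L2 a h b x y) * h23
    + ((a * h / b + a) / 2 * L3 h x y + a * L2 a h b x y) * h12

theorem Ny3_eq_zero_of_isNode (hn : IsNode a h b x y) : Ny3 a h b x y = 0 := by
  obtain ⟨h12, h23, h31⟩ := hn
  unfold Ny3
  linear_combination (a * (1 - h / b) * L3 h x y) * h31
    + ((a * (1 - h / b) - a * h / b) / 2 * L3 h x y) * h12 - (a * h / b * L3 h x y) * h23

theorem hasDerivAt_Ny2_of_isNode (hn : IsNode a h b (X t) (Y t)) (hX : HasDerivAt X X' t)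
    (hY : HasDerivAt Y Y' t) :
    HasDerivAt (fun s => Ny2 a h b (X s) (Y s))
      (L2 a h b (X t) (Y t) ^ 2 * (a * h / b * (Y' / h) + a * (-(X' / a) - Y' / b))) t := by
  obtain ⟨h12, h23, h31⟩ := hn
  have d1 := hasDerivAt_L1 (a := a) (b := b) hX hY
  have d2 := hasDerivAt_L2 (a := a) (h := h) (b := b) hX hY
  have d3 := hasDerivAt_L3 (h := h) (X := X) hY
  have d23 := d2.sq_mul_of_mul_eq_zero d3 h23
  have d21 := d2.sq_mul_of_mul_eq_zero d1 ((mul_comm _ _).trans h12)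
  have d123 := d1.mul_mul_of_pairwise_mul_eq_zero d2 d3 h12 h23 h31
  refine ((((d23.const_mul (a * h / b)).add (d21.const_mul a)).add
    (d123.const_mul ((a * h / b + a) / 2))).congr_of_eventuallyEq
      (.of_forall fun s => by simp only [Ny2, Pi.add_apply]; ring)).congr_deriv (by ring)

theorem hasDerivAt_Ny3_of_isNode (hn : IsNode a h b (X t) (Y t)) (hX : HasDerivAt X X' t)
    (hY : HasDerivAt Y Y' t) :
    HasDerivAt (fun s => Ny3 a h b (X s) (Y s))
      (L3 h (X t) (Y t) ^ 2 * (a * (1 - h / b) * (-(X' / a) - Y' / b)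
        - a * h / b * (X' / a - (1 / h - 1 / b) * Y'))) t := by
  obtain ⟨h12, h23, h31⟩ := hn
  have d1 := hasDerivAt_L1 (a := a) (b := b) hX hY
  have d2 := hasDerivAt_L2 (a := a) (h := h) (b := b) hX hY
  have d3 := hasDerivAt_L3 (h := h) (X := X) hY
  have d31 := d3.sq_mul_of_mul_eq_zero d1 h31
  have d32 := d3.sq_mul_of_mul_eq_zero d2 ((mul_comm _ _).trans h23)
  have d123 := d1.mul_mul_of_pairwise_mul_eq_zero d2 d3 h12 h23 h31
  refine ((((d31.const_mul (a * (1 - h / b))).sub (d32.const_mul (a * h / b))).add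
    (d123.const_mul ((a * (1 - h / b) - a * h / b) / 2))).congr_of_eventuallyEq
      (.of_forall fun s => by simp only [Ny3, Pi.add_apply, Pi.sub_apply]; ring)).congr_deriv
        (by ring)

theorem pdx_Ny2_of_isNode (ha : a ≠ 0) (hn : IsNode a h b x y) :
    pdx (Ny2 a h b) x y = -L2 a h b x y ^ 2 := by
  rw [pdx, (hasDerivAt_Ny2_of_isNode (X := fun s => s) (Y := fun _ => y) hn
    (hasDerivAt_id' x) (hasDerivAt_const x y)).deriv]
  field_simp
  ring

theorem pdy_Ny2_of_isNode (hh : h ≠ 0) (hn : IsNode a h b x y) : pdy (Ny2 a h b) x y = 0 := by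
  rw [pdy, (hasDerivAt_Ny2_of_isNode (X := fun _ => x) (Y := fun s => s) hn
    (hasDerivAt_const y x) (hasDerivAt_id' y)).deriv]
  field_simp
  ring

theorem pdx_Ny3_of_isNode (ha : a ≠ 0) (hn : IsNode a h b x y) :
    pdx (Ny3 a h b) x y = -L3 h x y ^ 2 := by
  rw [pdx, (hasDerivAt_Ny3_of_isNode (X := fun s => s) (Y := fun _ => y) hn
    (hasDerivAt_id' x) (hasDerivAt_const x y)).deriv]
  field_simp
  ring

theorem pdy_Ny3_of_isNode (hh : h ≠ 0) (hn : IsNode a h b x y) : pdy (Ny3 a h b) x y = 0 := by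
  rw [pdy, (hasDerivAt_Ny3_of_isNode (X := fun _ => x) (Y := fun s => s) hn
    (hasDerivAt_const y x) (hasDerivAt_id' y)).deriv]
  field_simp
  ring

end Nodes

theorem Ny2_Ny3_kronecker_delta_general (a h b : ℝ) (ha : 0 < a) (hh : 0 < h) :
    (Ny2 a h b 0 0 = 0 ∧ Ny2 a h b a 0 = 0 ∧ Ny2 a h b (a * (1 - h / b)) h = 0) ∧
    (Ny3 a h b 0 0 = 0 ∧ Ny3 a h b a 0 = 0 ∧ Ny3 a h b (a * (1 - h / b)) h = 0) ∧
    (pdy (Ny2 a h b) 0 0 = 0 ∧ pdy (Ny2 a h b) a 0 = 0 ∧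
      pdy (Ny2 a h b) (a * (1 - h / b)) h = 0) ∧
    (pdy (Ny3 a h b) 0 0 = 0 ∧ pdy (Ny3 a h b) a 0 = 0 ∧
      pdy (Ny3 a h b) (a * (1 - h / b)) h = 0) ∧
    (pdx (Ny2 a h b) a 0 = -1 ∧ pdx (Ny2 a h b) 0 0 = 0 ∧
      pdx (Ny2 a h b) (a * (1 - h / b)) h = 0) ∧
    (pdx (Ny3 a h b) (a * (1 - h / b)) h = -1 ∧ pdx (Ny3 a h b) 0 0 = 0 ∧
      pdx (Ny3 a h b) a 0 = 0) := by
  obtain ⟨-, p1₂, p1₃⟩ := areaCoords_P1 (a := a) (h := h) (b := b)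
  obtain ⟨p2₁, p2₂, p2₃⟩ := areaCoords_P2 (h := h) (b := b) ha.ne'
  obtain ⟨p3₁, p3₂, p3₃⟩ := areaCoords_P3 (b := b) ha.ne' hh.ne'
  have n1 : IsNode a h b 0 0 := by simp [IsNode, p1₂, p1₃]
  have n2 : IsNode a h b a 0 := by simp [IsNode, p2₁, p2₃]
  have n3 : IsNode a h b (a * (1 - h / b)) h := by simp [IsNode, p3₁, p3₂]
  refine ⟨⟨Ny2_eq_zero_of_isNode n1, Ny2_eq_zero_of_isNode n2, Ny2_eq_zero_of_isNode n3⟩,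
    ⟨Ny3_eq_zero_of_isNode n1, Ny3_eq_zero_of_isNode n2, Ny3_eq_zero_of_isNode n3⟩,
    ⟨pdy_Ny2_of_isNode hh.ne' n1, pdy_Ny2_of_isNode hh.ne' n2, pdy_Ny2_of_isNode hh.ne' n3⟩,
    ⟨pdy_Ny3_of_isNode hh.ne' n1, pdy_Ny3_of_isNode hh.ne' n2, pdy_Ny3_of_isNode hh.ne' n3⟩,
    ?_, ?_⟩
  · simp [pdx_Ny2_of_isNode ha.ne', n1, n2, n3, p1₂, p2₂, p3₂]
  · simp [pdx_Ny3_of_isNode ha.ne', n1, n2, n3, p1₃, p2₃, p3₃]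

/-- Kronecker delta property of the rotational shape functions `Ny2`, `Ny3`
at the nodes `P1 = (0,0)`, `P2 = (a,0)`, `P3 = (a(1-h/b), h)`. -/
theorem Ny2_Ny3_kronecker_delta (a h b : ℝ) (ha : 0 < a) (hh : 0 < h) (hb : h ≤ b) :
    (Ny2 a h b 0 0 = 0 ∧ Ny2 a h b a 0 = 0 ∧ Ny2 a h b (a * (1 - h / b)) h = 0) ∧
    (Ny3 a h b 0 0 = 0 ∧ Ny3 a h b a 0 = 0 ∧ Ny3 a h b (a * (1 - h / b)) h = 0) ∧
    (pdy (Ny2 a h b) 0 0 = 0 ∧ pdy (Ny2 a h b) a 0 = 0 ∧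
      pdy (Ny2 a h b) (a * (1 - h / b)) h = 0) ∧
    (pdy (Ny3 a h b) 0 0 = 0 ∧ pdy (Ny3 a h b) a 0 = 0 ∧
      pdy (Ny3 a h b) (a * (1 - h / b)) h = 0) ∧
    (pdx (Ny2 a h b) a 0 = -1 ∧ pdx (Ny2 a h b) 0 0 = 0 ∧
      pdx (Ny2 a h b) (a * (1 - h / b)) h = 0) ∧
    (pdx (Ny3 a h b) (a * (1 - h / b)) h = -1 ∧ pdx (Ny3 a h b) 0 0 = 0 ∧
      pdx (Ny3 a h b) a 0 = 0) :=
  Ny2_Ny3_kronecker_delta_general a h b ha hh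
end
end

section
/- Vertical translates of the basic full node shape function by at least two grid steps have disjoint supports: for every integer d with |d| ≥ 2 and every (x,y) ∈ ℝ², φ(x,y) · φ(x, y - d·h) = 0. (This underlies the sparsity relation k_{cd,rs} = 0 of the element stiffness matrix when node indices differ by more than one.) -/
noncomputable section

/-- Linear functional `g1(x,y) = x/a + y/b`. -/
def g1 (a b : ℝ) (p : ℝ × ℝ) : ℝ := p.1 / a + p.2 / b

/-- Linear functional `g2(x,y) = x/a - (1/h - 1/b)·y`. -/
def g2 (a h b : ℝ) (p : ℝ × ℝ) : ℝ := p.1 / a - (1 / h - 1 / b) * p.2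

/-- Linear functional `g3(x,y) = y/h`. -/
def g3 (h : ℝ) (p : ℝ × ℝ) : ℝ := p.2 / h

/-- The cubic polynomial `F(u,v,w) = u + u²·(v + w) - u·(v² + w²)`. -/
def Fcube (u v w : ℝ) : ℝ := u + u ^ 2 * (v + w) - u * (v ^ 2 + w ^ 2)

/-- The six subdomains `D1, …, D6` of the hexagon around the origin. -/
def Dom (a h b : ℝ) : Fin 6 → Set (ℝ × ℝ)
  | 0 => {p | 0 ≤ g2 a h b p ∧ 0 ≤ g3 h p ∧ g1 a b p ≤ 1}
  | 1 => {p | 0 ≤ g1 a b p ∧ g2 a h b p ≤ 0 ∧ g3 h p ≤ 1}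
  | 2 => {p | g1 a b p ≤ 0 ∧ 0 ≤ g3 h p ∧ -1 ≤ g2 a h b p}
  | 3 => {p | g2 a h b p ≤ 0 ∧ g3 h p ≤ 0 ∧ -1 ≤ g1 a b p}
  | 4 => {p | g1 a b p ≤ 0 ∧ 0 ≤ g2 a h b p ∧ -1 ≤ g3 h p}
  | 5 => {p | 0 ≤ g1 a b p ∧ g3 h p ≤ 0 ∧ g2 a h b p ≤ 1}

/-- The six polynomial pieces of the basic full node shape function. -/
def Fpiece (a h b : ℝ) : Fin 6 → ℝ × ℝ → ℝ
  | 0 => fun p => Fcube (1 - g1 a b p) (g2 a h b p) (g3 h p)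
  | 1 => fun p => Fcube (1 - g3 h p) (g1 a b p) (-g2 a h b p)
  | 2 => fun p => Fcube (1 + g2 a h b p) (-g1 a b p) (g3 h p)
  | 3 => fun p => Fcube (1 + g1 a b p) (-g2 a h b p) (-g3 h p)
  | 4 => fun p => Fcube (1 + g3 h p) (-g1 a b p) (g2 a h b p)
  | 5 => fun p => Fcube (1 - g2 a h b p) (g1 a b p) (-g3 h p)

open Classical in
/-- The basic full node shape function `φ`, defined piecewise on the hexagon
`D1 ∪ … ∪ D6` and zero outside. -/
def phi (a h b : ℝ) (p : ℝ × ℝ) : ℝ :=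
  if p ∈ Dom a h b 0 then Fpiece a h b 0 p
  else if p ∈ Dom a h b 1 then Fpiece a h b 1 p
  else if p ∈ Dom a h b 2 then Fpiece a h b 2 p
  else if p ∈ Dom a h b 3 then Fpiece a h b 3 p
  else if p ∈ Dom a h b 4 then Fpiece a h b 4 p
  else if p ∈ Dom a h b 5 then Fpiece a h b 5 p
  else 0

/-! Since `F(0, v, w) = 0`, `φ` vanishes wherever `|g3| ≥ 1`: such a point of the hexagon lies
on its top edge `g3 = 1` (or bottom edge `g3 = -1`), and the pieces `D1, D2, D3` (resp. `D4, D5, D6`)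
that reach it have first argument `1 - g1`, `1 - g3`, `1 + g2` (resp. `1 + g1`, `1 + g3`, `1 - g2`)
equal to zero there, by `g1 = g2 + g3`. Two points at vertical distance at least `2h` cannot both
satisfy `|g3| < 1`. -/

lemma Fcube_eq_zero_of_left_eq_zero {u : ℝ} (hu : u = 0) (v w : ℝ) : Fcube u v w = 0 := by
  simp [Fcube, hu]

lemma g1_eq_g2_add_g3 (a h b : ℝ) (p : ℝ × ℝ) : g1 a b p = g2 a h b p + g3 h p := by
  simp only [g1, g2, g3]
  ring

lemma g3_sub_mul (h : ℝ) (hh : h ≠ 0) (x y t : ℝ) : g3 h (x, y - t * h) = g3 h (x, y) - t := by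
  simp only [g3]
  field_simp

section

variable {a h b : ℝ} {p : ℝ × ℝ}

lemma phi_eq_zero_of_one_le_g3 (hp : 1 ≤ g3 h p) : phi a h b p = 0 := by
  have hsum := g1_eq_g2_add_g3 a h b p
  unfold phi
  split_ifs with h0 h1 h2 h3 h4 h5
  · exact Fcube_eq_zero_of_left_eq_zero (by linarith [h0.1, h0.2.2]) _ _
  · exact Fcube_eq_zero_of_left_eq_zero (by linarith [h1.2.2]) _ _
  · exact Fcube_eq_zero_of_left_eq_zero (by linarith [h2.1, h2.2.2]) _ _
  · linarith [h3.2.1]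
  · linarith [h4.1, h4.2.1]
  · linarith [h5.2.1]
  · rfl

lemma phi_eq_zero_of_g3_le_neg_one (hp : g3 h p ≤ -1) : phi a h b p = 0 := by
  have hsum := g1_eq_g2_add_g3 a h b p
  unfold phi
  split_ifs with h0 h1 h2 h3 h4 h5
  · linarith [h0.2.1]
  · linarith [h1.1, h1.2.1]
  · linarith [h2.2.1]
  · exact Fcube_eq_zero_of_left_eq_zero (by linarith [h3.1, h3.2.2]) _ _
  · exact Fcube_eq_zero_of_left_eq_zero (by linarith [h4.2.2]) _ _
  · exact Fcube_eq_zero_of_left_eq_zero (by linarith [h5.1, h5.2.2]) _ _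
  · rfl

lemma phi_eq_zero_of_one_le_abs_g3 (hp : 1 ≤ |g3 h p|) : phi a h b p = 0 :=
  (le_abs'.1 hp).elim (fun hneg => phi_eq_zero_of_g3_le_neg_one (by linarith))
    phi_eq_zero_of_one_le_g3

end

lemma one_le_abs_or_one_le_abs_sub_intCast (t : ℝ) {d : ℤ} (hd : 2 ≤ |d|) :
    1 ≤ |t| ∨ 1 ≤ |t - d| := by
  have hd' : (2 : ℝ) ≤ |(d : ℝ)| := by exact_mod_cast hd
  by_contra! hlt
  linarith [abs_sub_abs_le_abs_sub (d : ℝ) t, abs_sub_comm (d : ℝ) t]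

theorem phi_translates_disjoint_support_general (a h b : ℝ)
    (hh : 0 < h) :
    ∀ d : ℤ, 2 ≤ |d| → ∀ x y : ℝ,
      phi a h b (x, y) * phi a h b (x, y - (d : ℝ) * h) = 0 := by
  intro d hd x y
  rcases one_le_abs_or_one_le_abs_sub_intCast (g3 h (x, y)) hd with hy | hy
  · rw [phi_eq_zero_of_one_le_abs_g3 hy, zero_mul]
  · rw [← g3_sub_mul h hh.ne' x y d] at hy
    rw [phi_eq_zero_of_one_le_abs_g3 hy, mul_zero]

/-- Vertical translates of `φ` by at least two grid steps have disjoint supports. -/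
theorem phi_translates_disjoint_support (a h b : ℝ)
    (ha : 0 < a) (hh : 0 < h) (hb : h ≤ b) :
    ∀ d : ℤ, 2 ≤ |d| → ∀ x y : ℝ,
      phi a h b (x, y) * phi a h b (x, y - (d : ℝ) * h) = 0 :=
  phi_translates_disjoint_support_general a h b hh
end
end

section
/- For every positive integer m, the scaled and shifted family of basis functions ψ_{r,s}(x,y) = φ(m·x - (r - s·h/b)·a, m·y - s·h), indexed by the integer pairs (r,s) with 0 ≤ s ≤ r ≤ m, is linearly independent over ℝ in the real vector space of functions ℝ² → ℝ. (These functions span the displacement subspace V_m of the multiresolution analysis.) -/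
noncomputable section

/-!
`φ` is a Lagrange-type nodal function on the lattice `((k - l·h/b)·a, l·h)` (`k, l ∈ ℤ`): at such a
point `g1 = k`, `g2 = k - l`, `g3 = l` are integers, and away from the origin the inequalities
defining whichever piece `Dᵢ` contains the point force the first argument of `F` to vanish, while
`φ(0) = F(1, 0, 0) = 1`. Hence `ψ_{r,s}` takes the value `δ` at the scaled nodes, and evaluation
at those nodes separates the family.
-/

theorem linearIndependent_of_apply_eq_single {ι X R : Type*} [Semiring R] [DecidableEq ι]
    {f : ι → X → R} (x : ι → X) (hf : ∀ i j, f i (x j) = (Pi.single i 1 : ι → R) j) :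
    LinearIndependent R f := by
  let evalNodes : (X → R) →ₗ[R] ι → R := LinearMap.pi fun j => LinearMap.proj (x j)
  have hcomp : evalNodes ∘ f = fun i => Pi.single i 1 := funext fun i => funext (hf i)
  exact .of_comp evalNodes (hcomp ▸ Pi.linearIndependent_single_one ι R)

lemma phi_eq_zero_of_forall_mem_Dom {a h b : ℝ} {p : ℝ × ℝ}
    (hp : ∀ i, p ∈ Dom a h b i → Fpiece a h b i p = 0) : phi a h b p = 0 := by
  unfold phi
  split_ifs with h0 h1 h2 h3 h4 h5
  exacts [hp 0 h0, hp 1 h1, hp 2 h2, hp 3 h3, hp 4 h4, hp 5 h5, rfl]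

def latticePoint (a h b : ℝ) (k l : ℤ) : ℝ × ℝ := (((k : ℝ) - l * h / b) * a, l * h)

section latticePoint

variable {a h b : ℝ} {k l : ℤ}

lemma g1_latticePoint (ha : a ≠ 0) : g1 a b (latticePoint a h b k l) = k := by
  simp only [g1, latticePoint]
  field_simp
  ring

lemma g2_latticePoint (ha : a ≠ 0) (hh : h ≠ 0) :
    g2 a h b (latticePoint a h b k l) = k - l := by
  simp only [g2, latticePoint]
  field_simp
  ring

lemma g3_latticePoint (hh : h ≠ 0) : g3 h (latticePoint a h b k l) = l := by
  simp only [g3, latticePoint]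
  field_simp

lemma phi_latticePoint_zero : phi a h b (latticePoint a h b 0 0) = 1 := by
  have h0 : latticePoint a h b 0 0 ∈ Dom a h b 0 := by
    simp [Dom, latticePoint, g1, g2, g3]
  rw [phi, if_pos h0]
  simp [Fpiece, Fcube, latticePoint, g1, g2, g3]

lemma Fpiece_latticePoint_eq_zero (ha : a ≠ 0) (hh : h ≠ 0) (hkl : ¬(k = 0 ∧ l = 0))
    {i : Fin 6} (hi : latticePoint a h b k l ∈ Dom a h b i) :
    Fpiece a h b i (latticePoint a h b k l) = 0 := by
  fin_cases i <;>
    simp only [Dom, Fpiece, Set.mem_ofPred_eq, g1_latticePoint ha, g2_latticePoint ha hh,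
      g3_latticePoint hh] at hi ⊢ <;>
    obtain ⟨c1, c2, c3⟩ := hi <;>
    apply Fcube_eq_zero_of_left_eq_zero <;>
    norm_cast at * <;>
    omega

lemma phi_latticePoint (ha : a ≠ 0) (hh : h ≠ 0) :
    phi a h b (latticePoint a h b k l) = if k = 0 ∧ l = 0 then 1 else 0 := by
  split_ifs with hkl
  · obtain ⟨rfl, rfl⟩ := hkl
    exact phi_latticePoint_zero
  · exact phi_eq_zero_of_forall_mem_Dom fun i => Fpiece_latticePoint_eq_zero ha hh hkl

end latticePoint

theorem scaled_shifted_family_linearIndependent_general (a h b : ℝ)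
    (ha : 0 < a) (hh : 0 < h) (m : ℕ) (hm : 0 < m) :
    LinearIndependent ℝ
      (fun rs : {q : ℕ × ℕ // q.2 ≤ q.1 ∧ q.1 ≤ m} =>
        fun p : ℝ × ℝ =>
          phi a h b ((m : ℝ) * p.1 - ((rs.1.1 : ℝ) - (rs.1.2 : ℝ) * h / b) * a,
            (m : ℝ) * p.2 - (rs.1.2 : ℝ) * h)) := by
  refine linearIndependent_of_apply_eq_single
    (fun i => (m : ℝ)⁻¹ • latticePoint a h b i.1.1 i.1.2) fun j i => ?_
  have hm' : (m : ℝ) ≠ 0 := by positivity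
  have hshift : ((m : ℝ) * ((m : ℝ)⁻¹ • latticePoint a h b i.1.1 i.1.2).1
        - ((j.1.1 : ℝ) - (j.1.2 : ℝ) * h / b) * a,
      (m : ℝ) * ((m : ℝ)⁻¹ • latticePoint a h b i.1.1 i.1.2).2 - (j.1.2 : ℝ) * h)
      = latticePoint a h b (i.1.1 - j.1.1) (i.1.2 - j.1.2) := by
    simp only [latticePoint, Prod.smul_fst, Prod.smul_snd, smul_eq_mul, mul_inv_cancel_left₀ hm']
    push_cast
    ext <;> ring
  simp only [hshift, phi_latticePoint ha.ne' hh.ne', Pi.single_apply, sub_eq_zero,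
    Nat.cast_inj, Subtype.ext_iff, Prod.ext_iff]

/-- For every positive integer `m`, the scaled and shifted family
`ψ_{r,s}(x,y) = φ(m·x - (r - s·h/b)·a, m·y - s·h)` with `0 ≤ s ≤ r ≤ m`
is linearly independent over `ℝ`. -/
theorem scaled_shifted_family_linearIndependent (a h b : ℝ)
    (ha : 0 < a) (hh : 0 < h) (hb : h ≤ b) (m : ℕ) (hm : 0 < m) :
    LinearIndependent ℝ
      (fun rs : {q : ℕ × ℕ // q.2 ≤ q.1 ∧ q.1 ≤ m} =>
        fun p : ℝ × ℝ =>
          phi a h b ((m : ℝ) * p.1 - ((rs.1.1 : ℝ) - (rs.1.2 : ℝ) * h / b) * a,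
            (m : ℝ) * p.2 - (rs.1.2 : ℝ) * h)) :=
  scaled_shifted_family_linearIndependent_general a h b ha hh m hm
end
end
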